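/- arXiv:2201.12190 — 6 statements merged into one kernel-verified Lean document; each statement's English description precedes it below -/
import Mathlib

section
/- Let X be a complex Banach space and let L, M, E, F : ℂ → L(X,X) be analytic operator-valued functions such that E(z) and F(z) are invertible for every z ∈ ℂ and M(z) = F(z) L(z) E(z) for all z. Fix μ ∈ ℂ. If (x₀,…,x_{k-1}) is a Jordan chain of length k for L at μ, then there exists a Jordan chain (y₀,…,y_{k-1}) of length k for M at μ. Consequently the maximal Jordan chain lengths (and hence the algebraic multiplicities, when defined) of L and M at μ coincide. -/
open Asymptotics

/-- A Jordan chain of length `k` at `μ` for an analytic operator-valued function `L`. -/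
def IsJordanChain {X : Type*} [NormedAddCommGroup X] [NormedSpace ℂ X]
    (L : ℂ → (X →L[ℂ] X)) (μ : ℂ) (k : ℕ) (x : ℕ → X) : Prop :=
  x 0 ≠ 0 ∧
    (fun z => L z (∑ j ∈ Finset.range k, (z - μ) ^ j • x j))
      =O[nhds μ] fun z => (z - μ) ^ k

/-!
If `x` is a Jordan chain for `L` with generating polynomial `P(z) = ∑ (z - μ)ʲ xⱼ`, then
`q(z) = E(z)⁻¹ P(z)` is analytic at `μ`, and its Taylor polynomial `Q` of degree `< k` satisfies
`E(z) Q(z) = P(z) + O((z - μ)ᵏ)`. Hence `F(z) L(z) E(z) Q(z) = F(z) L(z) P(z) + O((z - μ)ᵏ)`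
is `O((z - μ)ᵏ)`, and `Q(μ) = E(μ)⁻¹ x₀ ≠ 0`. Since `L = F⁻¹ M E⁻¹` has the same shape,
chains transfer in both directions.
-/

open Filter Topology

lemma Asymptotics.IsBigO.continuousLinearMap_apply {α 𝕜 E F G : Type*} [TopologicalSpace α]
    [NontriviallyNormedField 𝕜] [NormedAddCommGroup E] [NormedSpace 𝕜 E]
    [NormedAddCommGroup F] [NormedSpace 𝕜 F] [Norm G]
    {A : α → E →L[𝕜] F} {g : α → E} {h : α → G} {a : α}
    (hA : ContinuousAt A a) (hg : g =O[𝓝 a] h) :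
    (fun z => A z (g z)) =O[𝓝 a] h := by
  refine IsBigO.trans ?_ hg
  refine isBigO_iff.2 ⟨‖A a‖ + 1, ?_⟩
  filter_upwards [hA.norm.eventually_lt_const (lt_add_one _)] with z hz
  calc ‖A z (g z)‖ ≤ ‖A z‖ * ‖g z‖ := (A z).le_opNorm _
    _ ≤ (‖A a‖ + 1) * ‖g z‖ := by gcongr

lemma HasFPowerSeriesAt.isBigO_sub_sum_coeff {𝕜 E : Type*} [NontriviallyNormedField 𝕜]
    [NormedAddCommGroup E] [NormedSpace 𝕜 E] {f : 𝕜 → E}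
    {p : FormalMultilinearSeries 𝕜 𝕜 E} {μ : 𝕜} (hf : HasFPowerSeriesAt f p μ) (k : ℕ) :
    (fun z => f z - ∑ j ∈ Finset.range k, (z - μ) ^ j • p.coeff j) =O[𝓝 μ]
      fun z => (z - μ) ^ k := by
  have hshift : Tendsto (fun z : 𝕜 => z - μ) (𝓝 μ) (𝓝 0) := by
    simpa using (tendsto_id (x := 𝓝 μ)).sub_const μ
  have := (hf.isBigO_sub_partialSum_pow k).comp_tendsto hshift
  refine (this.congr (fun z => ?_) (fun z => by simp [norm_pow])).of_norm_right
  simp [FormalMultilinearSeries.partialSum]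

lemma isJordanChain_zero {X : Type*} [NormedAddCommGroup X] [NormedSpace ℂ X]
    (L : ℂ → (X →L[ℂ] X)) (μ : ℂ) {x : ℕ → X} (hx : x 0 ≠ 0) : IsJordanChain L μ 0 x :=
  ⟨hx, by simp only [Finset.range_zero, Finset.sum_empty, map_zero]; exact isBigO_zero _ _⟩

section Transfer

variable {X : Type*} [NormedAddCommGroup X] [NormedSpace ℂ X]

lemma IsJordanChain.comp_left {L F : ℂ → (X →L[ℂ] X)} {μ : ℂ} {k : ℕ} {x : ℕ → X}
    (hx : IsJordanChain L μ k x) (hF : ContinuousAt F μ) :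
    IsJordanChain (fun z => F z ∘L L z) μ k x :=
  ⟨hx.1, IsBigO.continuousLinearMap_apply (A := F) hF hx.2⟩

lemma IsJordanChain.exists_comp_right [CompleteSpace X] {L E : ℂ → (X →L[ℂ] X)} {μ : ℂ}
    {k : ℕ} {x : ℕ → X} (hx : IsJordanChain L μ k x) (hL : ContinuousAt L μ)
    (hE : AnalyticAt ℂ E μ) (hEμ : IsUnit (E μ)) :
    ∃ y : ℕ → X, IsJordanChain (fun z => L z ∘L E z) μ k y := by
  rcases Nat.eq_zero_or_pos k with rfl | hk
  · exact ⟨x, isJordanChain_zero _ μ hx.1⟩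
  set P : ℂ → X := fun z => ∑ j ∈ Finset.range k, (z - μ) ^ j • x j
  have hPμ : P μ = x 0 := by
    simp only [P, sub_self]
    rw [Finset.sum_eq_single_of_mem 0 (Finset.mem_range.2 hk) fun j _ hj => by simp [hj]]
    simp
  have hEinv : AnalyticAt ℂ (fun z => Ring.inverse (E z)) μ :=
    (analyticOnNhd_inverse _ hEμ).comp hE
  have hP : AnalyticAt ℂ P μ :=
    Finset.analyticAt_fun_sum _ fun j _ =>
      ((analyticAt_id.sub analyticAt_const).pow j).smul analyticAt_const
  obtain ⟨p, hp⟩ : AnalyticAt ℂ (fun z => Ring.inverse (E z) (P z)) μ :=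
    ((ContinuousLinearMap.apply ℂ X (E := X)).analyticAt_bilinear _).comp (hP.prod hEinv)
  have hEq : ∀ᶠ z in 𝓝 μ, E z (Ring.inverse (E z) (P z)) = P z := by
    filter_upwards [hE.continuousAt.eventually (Units.isOpen.mem_nhds hEμ)] with z hz
    change (E z * Ring.inverse (E z)) (P z) = P z
    rw [Ring.mul_inverse_cancel _ hz]
    rfl
  refine ⟨p.coeff, fun h0 => hx.1 ?_, ?_⟩
  · have : p.coeff 0 = Ring.inverse (E μ) (P μ) := hp.coeff_zero _
    rw [← hPμ, ← hEq.self_of_nhds, ← this, h0, map_zero]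
  · have hTaylor := ((hp.isBigO_sub_sum_coeff k).neg_left.continuousLinearMap_apply
      hE.continuousAt).continuousLinearMap_apply hL
    refine (hx.2.add hTaylor).congr' ?_ EventuallyEq.rfl
    filter_upwards [hEq] with z hz
    simp only [ContinuousLinearMap.comp_apply, neg_sub, map_sub, hz, P]
    abel

theorem IsJordanChain.exists_comp_comp [CompleteSpace X] {L E F : ℂ → (X →L[ℂ] X)} {μ : ℂ}
    {k : ℕ} {x : ℕ → X} (hx : IsJordanChain L μ k x) (hL : ContinuousAt L μ)
    (hE : AnalyticAt ℂ E μ) (hEμ : IsUnit (E μ)) (hF : ContinuousAt F μ) :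
    ∃ y : ℕ → X, IsJordanChain (fun z => F z ∘L L z ∘L E z) μ k y :=
  let ⟨y, hy⟩ := hx.exists_comp_right hL hE hEμ
  ⟨y, hy.comp_left hF⟩

end Transfer

/-- Jordan chains transfer through analytic equivalence
`M(z) = F(z) L(z) E(z)`, hence the possible chain lengths (and so the algebraic
multiplicities) of `L` and `M` at `μ` coincide. -/
theorem stmt_4 {X : Type*} [NormedAddCommGroup X] [NormedSpace ℂ X] [CompleteSpace X]
    (L M E F : ℂ → (X →L[ℂ] X))
    (hL : ∀ z, AnalyticAt ℂ L z) (hM : ∀ z, AnalyticAt ℂ M z)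
    (hE : ∀ z, AnalyticAt ℂ E z) (hF : ∀ z, AnalyticAt ℂ F z)
    (hEu : ∀ z, IsUnit (E z)) (hFu : ∀ z, IsUnit (F z))
    (hfact : ∀ z, M z = F z ∘L L z ∘L E z)
    (μ : ℂ) (k : ℕ) (x : ℕ → X) (hx : IsJordanChain L μ k x) :
    (∃ y : ℕ → X, IsJordanChain M μ k y) ∧
      {m : ℕ | ∃ w : ℕ → X, IsJordanChain L μ m w}
        = {m : ℕ | ∃ w : ℕ → X, IsJordanChain M μ m w} := by
  have hM_eq : M = fun z => F z ∘L L z ∘L E z := funext hfact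
  have hL_eq : L = fun z => Ring.inverse (F z) ∘L M z ∘L Ring.inverse (E z) := by
    funext z
    simp only [hfact, ← ContinuousLinearMap.mul_def]
    rw [mul_assoc, mul_assoc, Ring.mul_inverse_cancel _ (hEu z), mul_one, ← mul_assoc,
      Ring.inverse_mul_cancel _ (hFu z), one_mul]
  have forward {m : ℕ} {w : ℕ → X} (hw : IsJordanChain L μ m w) :
      ∃ y : ℕ → X, IsJordanChain M μ m y :=
    hM_eq ▸ hw.exists_comp_comp (hL μ).continuousAt (hE μ) (hEu μ) (hF μ).continuousAt
  refine ⟨forward hx, Set.ext fun m => ⟨fun ⟨w, hw⟩ => forward hw, fun ⟨w, hw⟩ => ?_⟩⟩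
  rw [hL_eq]
  exact hw.exists_comp_comp (hM μ).continuousAt ((analyticOnNhd_inverse _ (hEu μ)).comp (hE μ))
    (isUnit_ringInverse.2 (hEu μ)) ((analyticOnNhd_inverse _ (hFu μ)).comp (hF μ)).continuousAt
end

section
/- Let X be a complex Banach space, T : X → X bounded, n ∈ ℕ, and Δ : ℂ → ℂ^{n×n} a characteristic matrix function for T, i.e. there exist analytic E, F : ℂ → L(ℂ^n ⊕ X) with E(z), F(z) invertible for all z such that diag(Δ(z), I_X) = F(z) · diag(I_{ℂ^n}, I - zT) · E(z). Then for every μ ∈ ℂ \ {0}: μ⁻¹ is an eigenvalue of T if and only if det Δ(μ) = 0. -/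
/-! Since `E μ` and `F μ` are invertible, the factorisation shows that `diag(Δ μ, I)` is
injective exactly when `diag(I, I - μ T)` is. The former is injective iff `det Δ μ ≠ 0`, the
latter iff `I - μ T` is, i.e. iff `μ⁻¹` is not an eigenvalue of `T`. -/

namespace ContinuousLinearMap

section Semiring

variable {R M N : Type*} [Semiring R] [TopologicalSpace M] [AddCommMonoid M] [Module R M]
  [TopologicalSpace N] [AddCommMonoid N] [Module R N]

theorem bijective_of_isUnit {f : M →L[R] M} (hf : IsUnit f) : Function.Bijective f := by
  obtain ⟨u, rfl⟩ := hf
  exact (ContinuousLinearEquiv.ofUnit u).bijective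

theorem injective_comp_comp_iff_of_isUnit {F B E : M →L[R] M} (hF : IsUnit F) (hE : IsUnit E) :
    Function.Injective (F ∘L B ∘L E) ↔ Function.Injective B := by
  rw [coe_comp, coe_comp, (bijective_of_isUnit hF).injective.of_comp_iff]
  exact Function.Injective.of_comp_iff' _ (bijective_of_isUnit hE)

theorem injective_prodMap_id_iff {f : M →L[R] M} :
    Function.Injective (f.prodMap (ContinuousLinearMap.id R N)) ↔ Function.Injective f := by
  rw [coe_prodMap', coe_id', Prod.map_injective, and_iff_left Function.injective_id]

theorem injective_id_prodMap_iff {g : N →L[R] N} :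
    Function.Injective ((ContinuousLinearMap.id R M).prodMap g) ↔ Function.Injective g := by
  rw [coe_prodMap', coe_id', Prod.map_injective, and_iff_right Function.injective_id]

end Semiring

section Field

variable {K M : Type*} [Field K] [TopologicalSpace M] [AddCommGroup M] [Module K M]
  [IsTopologicalAddGroup M] [ContinuousConstSMul K M]

theorem one_sub_smul_apply_eq_zero_iff (T : M →L[K] M) {μ : K} (hμ : μ ≠ 0) (x : M) :
    (1 - μ • T) x = 0 ↔ T x = μ⁻¹ • x := by
  rw [sub_apply, one_apply_eq_self, smul_apply, sub_eq_zero, eq_inv_smul_iff₀ hμ, eq_comm]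

theorem injective_one_sub_smul_iff (T : M →L[K] M) {μ : K} (hμ : μ ≠ 0) :
    Function.Injective ⇑(1 - μ • T : M →L[K] M) ↔ ¬∃ x : M, x ≠ 0 ∧ T x = μ⁻¹ • x := by
  rw [injective_iff_map_eq_zero]
  simp only [one_sub_smul_apply_eq_zero_iff T hμ, not_exists, not_and, not_imp_not]

end Field

end ContinuousLinearMap

theorem Matrix.injective_toContinuousLinearMap_mulVecLin_iff {ι K : Type*} [Fintype ι]
    [DecidableEq ι] [NontriviallyNormedField K] [CompleteSpace K] (A : Matrix ι ι K) :
    Function.Injective (LinearMap.toContinuousLinearMap A.mulVecLin) ↔ A.det ≠ 0 := by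
  rw [LinearMap.coe_toContinuousLinearMap', Matrix.coe_mulVecLin, mulVec_injective_iff_isUnit,
    isUnit_iff_isUnit_det, isUnit_iff_ne_zero]

open ContinuousLinearMap in
theorem stmt_5_general {X : Type*} [NormedAddCommGroup X] [NormedSpace ℂ X]
    (n : ℕ) (T : X →L[ℂ] X) (Δ : ℂ → Matrix (Fin n) (Fin n) ℂ)
    (E F : ℂ → (((Fin n → ℂ) × X) →L[ℂ] ((Fin n → ℂ) × X)))
    (hEu : ∀ z, IsUnit (E z)) (hFu : ∀ z, IsUnit (F z))
    (hfact : ∀ z : ℂ,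
      (LinearMap.toContinuousLinearMap ((Δ z).mulVecLin)).prodMap
          (ContinuousLinearMap.id ℂ X)
        = F z ∘L
            ((ContinuousLinearMap.id ℂ (Fin n → ℂ)).prodMap (1 - z • T)) ∘L E z)
    (μ : ℂ) (hμ : μ ≠ 0) :
    (∃ x : X, x ≠ 0 ∧ T x = μ⁻¹ • x) ↔ (Δ μ).det = 0 := by
  rw [← not_iff_not, ← ne_eq, ← Matrix.injective_toContinuousLinearMap_mulVecLin_iff,
    ← injective_prodMap_id_iff (N := X), hfact μ,
    injective_comp_comp_iff_of_isUnit (hFu μ) (hEu μ), injective_id_prodMap_iff,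
    injective_one_sub_smul_iff T hμ]

/-- if `Δ` is a characteristic matrix function for `T`, then for
`μ ≠ 0`, `μ⁻¹` is an eigenvalue of `T` iff `det Δ(μ) = 0`. -/
theorem stmt_5 {X : Type*} [NormedAddCommGroup X] [NormedSpace ℂ X] [CompleteSpace X]
    (n : ℕ) (T : X →L[ℂ] X) (Δ : ℂ → Matrix (Fin n) (Fin n) ℂ)
    (hΔ : ∀ (i j : Fin n) (z : ℂ), AnalyticAt ℂ (fun w => Δ w i j) z)
    (E F : ℂ → (((Fin n → ℂ) × X) →L[ℂ] ((Fin n → ℂ) × X)))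
    (hE : ∀ z, AnalyticAt ℂ E z) (hF : ∀ z, AnalyticAt ℂ F z)
    (hEu : ∀ z, IsUnit (E z)) (hFu : ∀ z, IsUnit (F z))
    (hfact : ∀ z : ℂ,
      (LinearMap.toContinuousLinearMap ((Δ z).mulVecLin)).prodMap
          (ContinuousLinearMap.id ℂ X)
        = F z ∘L
            ((ContinuousLinearMap.id ℂ (Fin n → ℂ)).prodMap (1 - z • T)) ∘L E z)
    (μ : ℂ) (hμ : μ ≠ 0) :
    (∃ x : X, x ≠ 0 ∧ T x = μ⁻¹ • x) ↔ (Δ μ).det = 0 :=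
  stmt_5_general n T Δ E F hEu hFu hfact μ hμ
end

section
/- Under the same hypotheses (Δ a characteristic matrix function for a bounded operator T on a complex Banach space X), if μ ∈ ℂ \ {0} and μ⁻¹ is an eigenvalue of T, then the geometric multiplicity of μ⁻¹ as an eigenvalue of T equals dim ker Δ(μ). More precisely, the map c ↦ (0, I_X) E(μ) (c, 0) is a linear bijection from ker Δ(μ) ⊆ ℂ^n onto ker(I - μT) ⊆ X, with inverse x ↦ (I_{ℂ^n}, 0) E(μ)⁻¹ (0, x). -/
/-
Write `Φ = Δ(μ) ⊕ I_X` and `Ψ = I ⊕ (I - μT)`. Since `Φ = F Ψ E` with `F` injective and `E`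
invertible, `E` maps `ker Φ = ker Δ(μ) × {0}` onto `ker Ψ = {0} × ker (I - μT)`, so reading off
the relevant component of `E` and of `E⁻¹` gives mutually inverse linear maps between the two
kernels.
-/

open Function LinearMap

section ProdMapIdFactorization

variable {R U V X Y : Type*} [Semiring R] [AddCommMonoid U] [AddCommMonoid V] [AddCommMonoid X]
  [AddCommMonoid Y] [Module R U] [Module R V] [Module R X] [Module R Y]
  {D : U →ₗ[R] V} {A : X →ₗ[R] Y} {F : U × Y →ₗ[R] V × X} {e : (U × X) ≃ₗ[R] (U × X)}

theorem and_eq_zero_iff_of_prodMap_id_eq (hF : Injective F)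
    (hfact : D.prodMap id = F ∘ₗ (id.prodMap A) ∘ₗ e.toLinearMap) (v : U × X) :
    D v.1 = 0 ∧ v.2 = 0 ↔ (e v).1 = 0 ∧ A (e v).2 = 0 := by
  have hv : (D v.1, v.2) = F ((e v).1, A (e v).2) := congr($hfact v)
  rw [← Prod.mk_eq_zero, ← Prod.mk_eq_zero, hv, map_eq_zero_iff F hF]

theorem invOn_of_prodMap_id_eq (hF : Injective F)
    (hfact : D.prodMap id = F ∘ₗ (id.prodMap A) ∘ₗ e.toLinearMap) :
    Set.InvOn (fun x => (e.symm (0, x)).1) (fun c => (e (c, 0)).2) (ker D) (ker A) := by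
  constructor
  · intro c (hc : D c = 0)
    have h := ((and_eq_zero_iff_of_prodMap_id_eq hF hfact (c, 0)).1 ⟨hc, rfl⟩).1
    change (e.symm (0, (e (c, 0)).2)).1 = c
    rw [show ((0 : U), (e (c, 0)).2) = e (c, 0) from Prod.ext h.symm rfl, e.symm_apply_apply]
  · intro x (hx : A x = 0)
    have h := ((and_eq_zero_iff_of_prodMap_id_eq hF hfact (e.symm (0, x))).2 (by simp [hx])).2
    change (e (((e.symm (0, x)).1, 0))).2 = x
    rw [show ((e.symm (0, x)).1, (0 : X)) = e.symm (0, x) from Prod.ext rfl h.symm,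
      e.apply_symm_apply]

theorem mapsTo_of_prodMap_id_eq (hF : Injective F)
    (hfact : D.prodMap id = F ∘ₗ (id.prodMap A) ∘ₗ e.toLinearMap) :
    Set.MapsTo (fun c => (e (c, 0)).2) (ker D) (ker A) :=
  fun c hc => ((and_eq_zero_iff_of_prodMap_id_eq hF hfact (c, 0)).1 ⟨hc, rfl⟩).2

theorem mapsTo_symm_of_prodMap_id_eq (hF : Injective F)
    (hfact : D.prodMap id = F ∘ₗ (id.prodMap A) ∘ₗ e.toLinearMap) :
    Set.MapsTo (fun x => (e.symm (0, x)).1) (ker A) (ker D) := fun x (hx : A x = 0) =>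
  ((and_eq_zero_iff_of_prodMap_id_eq hF hfact (e.symm (0, x))).2 (by simp [hx])).1

theorem bijOn_of_prodMap_id_eq (hF : Injective F)
    (hfact : D.prodMap id = F ∘ₗ (id.prodMap A) ∘ₗ e.toLinearMap) :
    Set.BijOn (fun c => (e (c, 0)).2) (ker D) (ker A) :=
  (invOn_of_prodMap_id_eq hF hfact).bijOn (mapsTo_of_prodMap_id_eq hF hfact)
    (mapsTo_symm_of_prodMap_id_eq hF hfact)

def kerEquivOfProdMapIdEq (hF : Injective F)
    (hfact : D.prodMap id = F ∘ₗ (id.prodMap A) ∘ₗ e.toLinearMap) : ker D ≃ₗ[R] ker A :=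
  LinearEquiv.ofLinearMap
    ((snd R U X ∘ₗ e.toLinearMap ∘ₗ inl R U X).restrict (mapsTo_of_prodMap_id_eq hF hfact))
    ((fst R U X ∘ₗ e.symm.toLinearMap ∘ₗ inr R U X).restrict
      (mapsTo_symm_of_prodMap_id_eq hF hfact))
    (LinearMap.ext fun x => Subtype.ext ((invOn_of_prodMap_id_eq hF hfact).2 x.2))
    (LinearMap.ext fun c => Subtype.ext ((invOn_of_prodMap_id_eq hF hfact).1 c.2))

end ProdMapIdFactorization

theorem stmt_6_general {X : Type*} [NormedAddCommGroup X] [NormedSpace ℂ X]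
    (n : ℕ) (T : X →L[ℂ] X) (Δ : ℂ → Matrix (Fin n) (Fin n) ℂ)
    (E Einv F : ℂ → (((Fin n → ℂ) × X) →L[ℂ] ((Fin n → ℂ) × X)))
    (hEinv : ∀ z, E z ∘L Einv z = 1 ∧ Einv z ∘L E z = 1)
    (hFu : ∀ z, IsUnit (F z))
    (hfact : ∀ z : ℂ,
      (LinearMap.toContinuousLinearMap ((Δ z).mulVecLin)).prodMap
          (ContinuousLinearMap.id ℂ X)
        = F z ∘L
            ((ContinuousLinearMap.id ℂ (Fin n → ℂ)).prodMap (1 - z • T)) ∘L E z)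
    (μ : ℂ) :
    Set.BijOn (fun c : Fin n → ℂ => (E μ (c, 0)).2)
        {c | (Δ μ).mulVec c = 0}
        {x | ((1 : X →L[ℂ] X) - μ • T) x = 0} ∧
    Set.InvOn (fun x : X => (Einv μ (0, x)).1)
        (fun c : Fin n → ℂ => (E μ (c, 0)).2)
        {c | (Δ μ).mulVec c = 0}
        {x | ((1 : X →L[ℂ] X) - μ • T) x = 0} ∧
    Module.finrank ℂ
        (LinearMap.ker (((1 : X →L[ℂ] X) - μ • T) : X →ₗ[ℂ] X))
      = Module.finrank ℂ (LinearMap.ker ((Δ μ).mulVecLin)) := by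
  let e := (ContinuousLinearEquiv.equivOfInverse' (E μ) (Einv μ) (hEinv μ).1
    (hEinv μ).2).toLinearEquiv
  obtain ⟨u, hu⟩ := hFu μ
  have hF : Injective (F μ) := hu ▸ (ContinuousLinearEquiv.ofUnit u).injective
  have hfactμ : (Δ μ).mulVecLin.prodMap id
      = (F μ : _ →ₗ[ℂ] _) ∘ₗ (id.prodMap ((1 : X →L[ℂ] X) - μ • T : X →ₗ[ℂ] X)) ∘ₗ
        e.toLinearMap :=
    LinearMap.ext fun v => congr($(hfact μ) v)
  exact ⟨bijOn_of_prodMap_id_eq hF hfactμ, invOn_of_prodMap_id_eq hF hfactμ,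
    (kerEquivOfProdMapIdEq hF hfactμ).finrank_eq.symm⟩

/-- if `Δ` is a characteristic matrix function for `T` and `μ⁻¹` is an
eigenvalue of `T` (`μ ≠ 0`), then `c ↦ (E(μ)(c,0))₂` is a bijection from `ker Δ(μ)`
onto `ker(I - μT)` with inverse `x ↦ (E(μ)⁻¹(0,x))₁`; in particular the geometric
multiplicity of `μ⁻¹` equals `dim ker Δ(μ)`. -/
theorem stmt_6 {X : Type*} [NormedAddCommGroup X] [NormedSpace ℂ X] [CompleteSpace X]
    (n : ℕ) (T : X →L[ℂ] X) (Δ : ℂ → Matrix (Fin n) (Fin n) ℂ)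
    (hΔ : ∀ (i j : Fin n) (z : ℂ), AnalyticAt ℂ (fun w => Δ w i j) z)
    (E Einv F : ℂ → (((Fin n → ℂ) × X) →L[ℂ] ((Fin n → ℂ) × X)))
    (hE : ∀ z, AnalyticAt ℂ E z) (hF : ∀ z, AnalyticAt ℂ F z)
    (hEinv : ∀ z, E z ∘L Einv z = 1 ∧ Einv z ∘L E z = 1)
    (hFu : ∀ z, IsUnit (F z))
    (hfact : ∀ z : ℂ,
      (LinearMap.toContinuousLinearMap ((Δ z).mulVecLin)).prodMap
          (ContinuousLinearMap.id ℂ X)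
        = F z ∘L
            ((ContinuousLinearMap.id ℂ (Fin n → ℂ)).prodMap (1 - z • T)) ∘L E z)
    (μ : ℂ) (hμ : μ ≠ 0)
    (hev : ∃ x : X, x ≠ 0 ∧ T x = μ⁻¹ • x) :
    Set.BijOn (fun c : Fin n → ℂ => (E μ (c, 0)).2)
        {c | (Δ μ).mulVec c = 0}
        {x | ((1 : X →L[ℂ] X) - μ • T) x = 0} ∧
    Set.InvOn (fun x : X => (Einv μ (0, x)).1)
        (fun c : Fin n → ℂ => (E μ (c, 0)).2)
        {c | (Δ μ).mulVec c = 0}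
        {x | ((1 : X →L[ℂ] X) - μ • T) x = 0} ∧
    Module.finrank ℂ
        (LinearMap.ker (((1 : X →L[ℂ] X) - μ • T) : X →ₗ[ℂ] X))
      = Module.finrank ℂ (LinearMap.ker ((Δ μ).mulVecLin)) :=
  stmt_6_general n T Δ E Einv F hEinv hFu hfact μ
end

section
/- Let A, B : ℝ → ℂ^{N×N} be continuous and h ∈ GL(N,ℂ) satisfy hA(t)h⁻¹ = A(t+τ), hB(t)h⁻¹ = B(t+τ). Let Y be the fundamental solution of y' = A(t)y with Y(0) = I, and let U(τ,0) : C([-τ,0],ℂ^N) → C([-τ,0],ℂ^N) be the time-τ solution operator of y'(t) = A(t)y(t) + B(t)y(t-τ), i.e. (U(τ,0)φ)(θ) = y(τ+θ) where y solves the DDE with initial history φ. Then for all θ ∈ [-τ,0] and φ: (h⁻¹U(τ,0)φ)(θ) = h⁻¹Y(τ+θ)φ(0) + ∫_{-τ}^{θ} Y(θ)Y(s)⁻¹ B(s) h⁻¹ φ(s) ds. -/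
/-!
On `[0, τ]` the delay term is the known history, so `y` solves a linear inhomogeneous ODE and
`Y⁻¹ y` has derivative `Y⁻¹ B φ(· - τ)`; this is variation of constants,
`Y(x)⁻¹ y(x) = φ(0) + ∫₀ˣ Y(s)⁻¹ B(s) φ(s - τ) ds`. The symmetry of `A` makes `h⁻¹ Y(τ + ·)`
another solution of `Z' = A Z`, so `Y(t)⁻¹ h⁻¹ Y(τ + t)` is constant, i.e.
`Y(τ + t) = h Y(t) h⁻¹ Y(τ)`, whence `h Y(t) Y(s)⁻¹ h⁻¹ = Y(τ + t) Y(τ + s)⁻¹`. Substituting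
`s ↦ s + τ` in the integral and using this together with the symmetry of `B` gives the formula.
-/

open Matrix MeasureTheory Set

variable {𝕜 : Type*} [RCLike 𝕜] {m n : Type*} [Fintype n]

theorem ContinuousOn.matrix_mulVec {X R : Type*} [TopologicalSpace X] [TopologicalSpace R]
    [NonUnitalNonAssocSemiring R] [ContinuousAdd R] [ContinuousMul R]
    {f : X → Matrix m n R} {g : X → n → R} {s : Set X}
    (hf : ContinuousOn f s) (hg : ContinuousOn g s) : ContinuousOn (fun x => f x *ᵥ g x) s := by
  rw [continuousOn_iff_continuous_domRestrict] at *
  exact hf.matrix_mulVec hg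

theorem Matrix.mulVec_intervalIntegral [Fintype m] (M : Matrix m n 𝕜) {f : ℝ → n → 𝕜} {a b : ℝ}
    (hf : IntervalIntegrable f volume a b) :
    M *ᵥ ∫ s in a..b, f s = ∫ s in a..b, M *ᵥ f s :=
  ((Matrix.mulVecLin M).toContinuousLinearMap.intervalIntegral_comp_comm hf).symm

theorem hasDerivAt_matrix_mulVec {M : ℝ → Matrix m n 𝕜} {M' : Matrix m n 𝕜}
    {v : ℝ → n → 𝕜} {v' : n → 𝕜} {t : ℝ}
    (hM : ∀ i j, HasDerivAt (fun s => M s i j) (M' i j) t) (hv : HasDerivAt v v' t) :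
    HasDerivAt (fun s => M s *ᵥ v s) (M' *ᵥ v t + M t *ᵥ v') t := by
  refine hasDerivAt_pi.2 fun i => ?_
  have hsum := HasDerivAt.fun_sum (u := Finset.univ)
    fun j _ => (hM i j).mul (hasDerivAt_pi.1 hv j)
  simpa [Matrix.mulVec, dotProduct, Finset.sum_add_distrib] using hsum

theorem hasDerivAt_matrix_iff [Fintype m] {f : ℝ → Matrix m n 𝕜} {f' : Matrix m n 𝕜} {t : ℝ} :
    HasDerivAt f f' t ↔ ∀ i j, HasDerivAt (fun s => f s i j) (f' i j) t :=
  hasDerivAt_pi.trans (forall_congr' fun _ => hasDerivAt_pi)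

section LinftyOpNorm

/- The `L∞` operator norm only makes `Matrix n n 𝕜` a complete normed algebra, where `Ring.inverse`
is differentiable; it induces the product topology, so derivatives are unaffected. -/
attribute [local instance] Matrix.linftyOpNormedAddCommGroup Matrix.linftyOpNormedRing
  Matrix.linftyOpNormedSpace Matrix.linftyOpNormedAlgebra

theorem hasDerivAt_matrix_inv [DecidableEq n] {Y : ℝ → Matrix n n 𝕜} {Y' : Matrix n n 𝕜} {t : ℝ}
    (hY : ∀ i j, HasDerivAt (fun s => Y s i j) (Y' i j) t) (hYt : IsUnit (Y t)) (i j : n) :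
    HasDerivAt (fun s => (Y s)⁻¹ i j) ((-((Y t)⁻¹ * Y' * (Y t)⁻¹)) i j) t := by
  have : CompleteSpace (Matrix n n 𝕜) := FiniteDimensional.complete ℝ _
  obtain ⟨u, hu⟩ := hYt
  have hcoe : ((u⁻¹ : (Matrix n n 𝕜)ˣ) : Matrix n n 𝕜) = (Y t)⁻¹ := by
    rw [Matrix.nonsing_inv_eq_ringInverse, ← hu, Ring.inverse_unit]
  have hinv := (hu ▸ hasFDerivAt_ringInverse (𝕜 := ℝ) u :
    HasFDerivAt Ring.inverse _ (Y t)).comp_hasDerivAt t (hasDerivAt_matrix_iff.2 hY)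
  simp only [Function.comp_def, ← Matrix.nonsing_inv_eq_ringInverse, hcoe] at hinv
  exact hasDerivAt_matrix_iff.1 hinv i j

end LinftyOpNorm

section FundamentalMatrix

variable [DecidableEq n] {A Y : ℝ → Matrix n n 𝕜}

theorem continuous_matrix_inv_of_hasDerivAt {Y' : ℝ → Matrix n n 𝕜}
    (hY : ∀ t i j, HasDerivAt (fun s => Y s i j) (Y' t i j) t) (hYu : ∀ t, IsUnit (Y t)) :
    Continuous fun s => (Y s)⁻¹ :=
  continuous_matrix fun i j => continuous_iff_continuousAt.2 fun t =>
    (hasDerivAt_matrix_inv (hY t) (hYu t) i j).continuousAt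

theorem hasDerivAt_inv_mulVec {y : ℝ → n → 𝕜} {b : n → 𝕜} {t : ℝ}
    (hY : ∀ i j, HasDerivAt (fun s => Y s i j) ((A t * Y t) i j) t) (hYt : IsUnit (Y t))
    (hy : HasDerivAt y (A t *ᵥ y t + b) t) :
    HasDerivAt (fun s => (Y s)⁻¹ *ᵥ y s) ((Y t)⁻¹ *ᵥ b) t := by
  convert hasDerivAt_matrix_mulVec (hasDerivAt_matrix_inv hY hYt) hy using 1
  have hdet := (isUnit_iff_isUnit_det _).1 hYt
  rw [Matrix.mul_assoc, Matrix.mul_assoc, mul_nonsing_inv _ hdet, Matrix.mul_one, mulVec_add,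
    neg_mulVec, mulVec_mulVec]
  abel

theorem inv_mulVec_eq_add_integral {y b : ℝ → n → 𝕜} {a x : ℝ}
    (hY : ∀ t ∈ uIcc a x, ∀ i j, HasDerivAt (fun s => Y s i j) ((A t * Y t) i j) t)
    (hYu : ∀ t ∈ uIcc a x, IsUnit (Y t))
    (hy : ∀ t ∈ uIcc a x, HasDerivAt y (A t *ᵥ y t + b t) t)
    (hint : IntervalIntegrable (fun s => (Y s)⁻¹ *ᵥ b s) volume a x) :
    (Y x)⁻¹ *ᵥ y x = (Y a)⁻¹ *ᵥ y a + ∫ s in a..x, (Y s)⁻¹ *ᵥ b s := by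
  rw [intervalIntegral.integral_eq_sub_of_hasDerivAt
    (fun t ht => hasDerivAt_inv_mulVec (hY t ht) (hYu t ht) (hy t ht)) hint]
  abel

theorem fundamental_add_eq_conj_mul {τ : ℝ} {h : Matrix n n 𝕜} (hh : IsUnit h)
    (hAsym : ∀ t, h * A t * h⁻¹ = A (t + τ)) (hY0 : Y 0 = 1) (hYu : ∀ t, IsUnit (Y t))
    (hY : ∀ t i j, HasDerivAt (fun s => Y s i j) ((A t * Y t) i j) t) (t : ℝ) :
    Y (τ + t) = h * Y t * h⁻¹ * Y τ := by
  have hdet := (isUnit_iff_isUnit_det _).1 hh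
  refine ext_iff_mulVec.2 fun v => ?_
  have hz : ∀ s, HasDerivAt (fun r => h⁻¹ *ᵥ (Y (τ + r) *ᵥ v))
      (A s *ᵥ (h⁻¹ *ᵥ (Y (τ + s) *ᵥ v)) + 0) s := by
    intro s
    have hYs := hasDerivAt_matrix_mulVec (fun i j => (hY (τ + s) i j).comp_const_add τ s)
      (hasDerivAt_const s v)
    convert hasDerivAt_matrix_mulVec (M' := 0) (fun i j => hasDerivAt_const s (h⁻¹ i j)) hYs
      using 1
    rw [add_comm τ s, ← hAsym s]
    simp only [mulVec_zero, add_zero, Matrix.zero_mul, zero_mulVec, zero_add, mulVec_mulVec,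
      Matrix.mul_assoc, nonsing_inv_mul_cancel_left _ _ hdet]
  have hconst := inv_mulVec_eq_add_integral (a := 0) (x := t) (fun s _ => hY s)
    (fun s _ => hYu s) (fun s _ => hz s) (by simp)
  simp only [hY0, inv_one, one_mulVec, add_zero, mulVec_zero, intervalIntegral.integral_zero]
    at hconst
  have hdetY := (isUnit_iff_isUnit_det _).1 (hYu t)
  calc Y (τ + t) *ᵥ v = h *ᵥ (Y t *ᵥ ((Y t)⁻¹ *ᵥ (h⁻¹ *ᵥ (Y (τ + t) *ᵥ v)))) := by
        simp only [mulVec_mulVec, ← Matrix.mul_assoc, mul_nonsing_inv _ hdetY,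
          mul_nonsing_inv _ hdet, Matrix.one_mul]
    _ = (h * Y t * h⁻¹ * Y τ) *ᵥ v := by rw [hconst]; simp only [mulVec_mulVec, Matrix.mul_assoc]

theorem conj_mul_inv_eq_shift_mul_inv {τ : ℝ} {h : Matrix n n 𝕜} (hh : IsUnit h)
    (hYu : ∀ t, IsUnit (Y t)) (hshift : ∀ t, Y (τ + t) = h * Y t * h⁻¹ * Y τ) (t s : ℝ) :
    h * (Y t * (Y s)⁻¹) * h⁻¹ = Y (τ + t) * (Y (τ + s))⁻¹ := by
  obtain ⟨H, rfl⟩ := hh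
  obtain ⟨T, hT⟩ := hYu t
  obtain ⟨S, hS⟩ := hYu s
  obtain ⟨P, hP⟩ := hYu τ
  rw [hshift, hshift, ← hT, ← hS, ← hP]
  simp only [← coe_units_inv, ← Units.val_mul]
  congr 1
  group

theorem integral_shift_conj_eq {τ θ : ℝ} {B Y : ℝ → Matrix n n 𝕜} {h : Matrix n n 𝕜}
    (hh : IsUnit h) (hBsym : ∀ t, h * B t * h⁻¹ = B (t + τ))
    (hconj : ∀ t s, h * (Y t * (Y s)⁻¹) * h⁻¹ = Y (τ + t) * (Y (τ + s))⁻¹) (φ : ℝ → n → 𝕜) :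
    ∫ s in 0..τ + θ, (h⁻¹ * Y (τ + θ)) *ᵥ ((Y s)⁻¹ *ᵥ (B s *ᵥ φ (s - τ)))
      = ∫ s in -τ..θ, (Y θ * (Y s)⁻¹ * B s * h⁻¹) *ᵥ φ s := by
  rw [← add_neg_cancel τ, ← intervalIntegral.integral_comp_add_left]
  refine intervalIntegral.integral_congr fun u _ => ?_
  rw [add_sub_cancel_left, mulVec_mulVec, mulVec_mulVec, Matrix.mul_assoc h⁻¹, ← hconj,
    add_comm τ u, ← hBsym u]
  simp only [Matrix.mul_assoc, nonsing_inv_mul_cancel_left _ _ ((isUnit_iff_isUnit_det _).1 hh)]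

end FundamentalMatrix

theorem stmt_14_general {N : ℕ} (τ : ℝ)
    (A B : ℝ → Matrix (Fin N) (Fin N) ℂ)
    (hB : Continuous B)
    (h : Matrix (Fin N) (Fin N) ℂ) (hh : IsUnit h)
    (hAsym : ∀ t, h * A t * h⁻¹ = A (t + τ))
    (hBsym : ∀ t, h * B t * h⁻¹ = B (t + τ))
    (Y : ℝ → Matrix (Fin N) (Fin N) ℂ)
    (hY0 : Y 0 = 1) (hYu : ∀ t, IsUnit (Y t))
    (hYd : ∀ (t : ℝ) (i j : Fin N),
      HasDerivAt (fun s => Y s i j) ((A t * Y t) i j) t)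
    (φ : ℝ → (Fin N → ℂ)) (hφ : ContinuousOn φ (Set.Icc (-τ) 0))
    (y : ℝ → (Fin N → ℂ))
    (hist : ∀ t ∈ Set.Icc (-τ) 0, y t = φ t)
    (hyd : ∀ t ∈ Set.Icc (0:ℝ) τ,
      HasDerivAt y ((A t).mulVec (y t) + (B t).mulVec (y (t - τ))) t) :
    ∀ θ ∈ Set.Icc (-τ) 0,
      h⁻¹.mulVec (y (τ + θ))
        = (h⁻¹ * Y (τ + θ)).mulVec (φ 0)
          + ∫ s in (-τ)..θ, (Y θ * (Y s)⁻¹ * B s * h⁻¹).mulVec (φ s) := by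
  rintro θ ⟨hθ₁, hθ₂⟩
  have hx : uIcc 0 (τ + θ) ⊆ Icc 0 τ := by
    rw [uIcc_of_le (by linarith)]; exact Icc_subset_Icc le_rfl (by linarith)
  have hpast : MapsTo (fun t => t - τ) (uIcc 0 (τ + θ)) (Icc (-τ) 0) := fun t ht =>
    ⟨by linarith [(hx ht).1], by linarith [(hx ht).2]⟩
  have hint : IntervalIntegrable (fun s => (Y s)⁻¹ *ᵥ (B s *ᵥ φ (s - τ))) volume 0 (τ + θ) :=
    ((continuous_matrix_inv_of_hasDerivAt hYd hYu).continuousOn.matrix_mulVec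
      (hB.continuousOn.matrix_mulVec
        (hφ.comp (continuous_sub_right τ).continuousOn hpast))).intervalIntegrable
  have hsol : ∀ t ∈ uIcc 0 (τ + θ), HasDerivAt y (A t *ᵥ y t + B t *ᵥ φ (t - τ)) t :=
    fun t ht => hist _ (hpast ht) ▸ hyd t (hx ht)
  have hvoc := inv_mulVec_eq_add_integral (fun t _ => hYd t) (fun t _ => hYu t) hsol hint
  rw [hY0, inv_one, one_mulVec, hist 0 ⟨by linarith, le_rfl⟩] at hvoc
  have hdet := (isUnit_iff_isUnit_det _).1 (hYu (τ + θ))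
  calc h⁻¹ *ᵥ y (τ + θ) = (h⁻¹ * Y (τ + θ)) *ᵥ ((Y (τ + θ))⁻¹ *ᵥ y (τ + θ)) := by
        rw [mulVec_mulVec, Matrix.mul_assoc, mul_nonsing_inv _ hdet, Matrix.mul_one]
    _ = (h⁻¹ * Y (τ + θ)) *ᵥ φ 0
        + ∫ s in 0..τ + θ, (h⁻¹ * Y (τ + θ)) *ᵥ ((Y s)⁻¹ *ᵥ (B s *ᵥ φ (s - τ))) := by
        rw [hvoc, mulVec_add, mulVec_intervalIntegral _ hint]
    _ = _ := by
        rw [integral_shift_conj_eq hh hBsym (conj_mul_inv_eq_shift_mul_inv hh hYu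
          (fundamental_add_eq_conj_mul hh hAsym hY0 hYu hYd))]

/-- explicit formula for `h⁻¹ U(τ,0)` applied to an initial history
`φ`, for a delay equation whose coefficients have the spatio-temporal symmetry
`h A(t) h⁻¹ = A(t+τ)`, `h B(t) h⁻¹ = B(t+τ)`. -/
theorem stmt_14 {N : ℕ} (τ : ℝ) (hτ : 0 < τ)
    (A B : ℝ → Matrix (Fin N) (Fin N) ℂ)
    (hA : Continuous A) (hB : Continuous B)
    (h : Matrix (Fin N) (Fin N) ℂ) (hh : IsUnit h)
    (hAsym : ∀ t, h * A t * h⁻¹ = A (t + τ))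
    (hBsym : ∀ t, h * B t * h⁻¹ = B (t + τ))
    (Y : ℝ → Matrix (Fin N) (Fin N) ℂ)
    (hY0 : Y 0 = 1) (hYu : ∀ t, IsUnit (Y t))
    (hYd : ∀ (t : ℝ) (i j : Fin N),
      HasDerivAt (fun s => Y s i j) ((A t * Y t) i j) t)
    (φ : ℝ → (Fin N → ℂ)) (hφ : ContinuousOn φ (Set.Icc (-τ) 0))
    (y : ℝ → (Fin N → ℂ))
    (hist : ∀ t ∈ Set.Icc (-τ) 0, y t = φ t)
    (hyd : ∀ t ∈ Set.Icc (0:ℝ) τ,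
      HasDerivAt y ((A t).mulVec (y t) + (B t).mulVec (y (t - τ))) t) :
    ∀ θ ∈ Set.Icc (-τ) 0,
      h⁻¹.mulVec (y (τ + θ))
        = (h⁻¹ * Y (τ + θ)).mulVec (φ 0)
          + ∫ s in (-τ)..θ, (Y θ * (Y s)⁻¹ * B s * h⁻¹).mulVec (φ s) :=
  stmt_14_general τ A B hB h hh hAsym hBsym Y hY0 hYu hYd φ hφ y hist hyd
end

section
/- Let A, B : ℝ → ℂ^{N×N} be continuous, h ∈ GL(N,ℂ) with hA(t)h⁻¹ = A(t+τ), hB(t)h⁻¹ = B(t+τ), and for z ∈ ℂ let F(·,z) be the fundamental solution of y' = [A(t) + z·B(t)h⁻¹]y with F(0,z) = I. Let Y be the fundamental solution for B ≡ 0 and define V, D on X = C([-τ,0],ℂ^N) by (Vφ)(θ) = ∫_{-τ}^θ Y(θ)Y(s)⁻¹B(s)h⁻¹φ(s)ds and (Du)(θ) = h⁻¹Y(τ+θ)u for u ∈ ℂ^N. Then for every z ∈ ℂ and u ∈ ℂ^N: ((I - zV)⁻¹Du)(θ) = h⁻¹F(τ+θ, z)u. -/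
/-! With `c θ = h⁻¹ Y(τ+θ) u` and `G θ = h⁻¹ F(τ+θ, z) u`, the symmetry `h⁻¹ A(t+τ) = A(t) h⁻¹`
(and its analogue for `B`) turns the equations of `Y` and `F`, shifted by `τ`, into `c' = A c` and
`G' = (A + z B h⁻¹) G`, with `c(-τ) = G(-τ) = h⁻¹ u`. By variation of constants, for continuous `φ`
the function `c + z V φ` solves `x' = A x + z B h⁻¹ φ` with the same initial value. Hence `G` and
`c + z V G` solve one affine ODE, while a continuous solution of `ψ = c + z V ψ` solves the linear
ODE of `G`; uniqueness for linear ODEs gives both claims. -/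

open Set Matrix

variable {𝕜 : Type*} [RCLike 𝕜] {m n : Type*} [Fintype n]

theorem hasDerivAt_mulVec {P : ℝ → Matrix m n 𝕜} {P' : Matrix m n 𝕜} {w : ℝ → n → 𝕜}
    {w' : n → 𝕜} {t : ℝ} (hP : ∀ i j, HasDerivAt (fun s => P s i j) (P' i j) t)
    (hw : HasDerivAt w w' t) :
    HasDerivAt (fun s => P s *ᵥ w s) (P' *ᵥ w t + P t *ᵥ w') t := by
  rw [hasDerivAt_pi]
  intro i
  simpa [mulVec, dotProduct, Finset.sum_add_distrib] using
    HasDerivAt.fun_sum (u := Finset.univ) fun j _ => (hP i j).mul (hasDerivAt_pi.1 hw j)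

theorem eqOn_Icc_of_hasDerivWithinAt_mulVec_add {M : ℝ → Matrix n n 𝕜} {r f g : ℝ → n → 𝕜}
    {a b : ℝ} (hM : ContinuousOn M (Icc a b)) (hf : ContinuousOn f (Icc a b))
    (hf' : ∀ t ∈ Ico a b, HasDerivWithinAt f (M t *ᵥ f t + r t) (Ici t) t)
    (hg : ContinuousOn g (Icc a b))
    (hg' : ∀ t ∈ Ico a b, HasDerivWithinAt g (M t *ᵥ g t + r t) (Ici t) t)
    (ha : f a = g a) : EqOn f g (Icc a b) := by
  let _ : NormedAddCommGroup (Matrix n n 𝕜) := Matrix.linftyOpNormedAddCommGroup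
  obtain ⟨C, hC⟩ := isCompact_Icc.exists_bound_of_continuousOn hM
  have hlip : ∀ t ∈ Ico a b, LipschitzOnWith C.toNNReal (fun x => M t *ᵥ x + r t) univ := by
    intro t ht
    refine (LipschitzWith.of_dist_le_mul fun x y => ?_).lipschitzOnWith
    rw [dist_eq_norm, dist_eq_norm, add_sub_add_right_eq_sub, ← mulVec_sub]
    exact (linfty_opNorm_mulVec _ _).trans <| mul_le_mul_of_nonneg_right
      ((hC t (Ico_subset_Icc_self ht)).trans (Real.le_coe_toNNReal C)) (norm_nonneg _)
  exact ODE_solution_unique_of_mem_Icc_right hlip hf hf' (fun _ _ => mem_univ _) hg hg'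
    (fun _ _ => mem_univ _) ha

theorem Matrix.inv_mul_eq_mul_inv_of_mul_mul_inv_eq {R : Type*} [CommRing R] [DecidableEq n]
    {h X X' : Matrix n n R} (hh : IsUnit h) (hX : h * X * h⁻¹ = X') : h⁻¹ * X' = X * h⁻¹ := by
  rw [← hX, mul_assoc, nonsing_inv_mul_cancel_left _ _ ((isUnit_iff_isUnit_det h).1 hh)]

theorem hasDerivAt_inv_mul_comp_const_add_mulVec [DecidableEq n] {M P : ℝ → Matrix n n 𝕜}
    {h : Matrix n n 𝕜} {τ : ℝ} (hP : ∀ t i j, HasDerivAt (fun s => P s i j) ((M t * P t) i j) t)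
    (hh : IsUnit h) (hM : ∀ t, h * M t * h⁻¹ = M (t + τ)) (u : n → 𝕜) (θ : ℝ) :
    HasDerivAt (fun s => (h⁻¹ * P (τ + s)) *ᵥ u) (M θ *ᵥ ((h⁻¹ * P (τ + θ)) *ᵥ u)) θ := by
  have hPu : HasDerivAt (fun s => P s *ᵥ u) ((M (τ + θ) * P (τ + θ)) *ᵥ u) (τ + θ) := by
    simpa using hasDerivAt_mulVec (hP (τ + θ)) (hasDerivAt_const (τ + θ) u)
  have := hasDerivAt_mulVec (P := fun _ => h⁻¹) (P' := 0) (fun _ _ => hasDerivAt_const θ _)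
    (hPu.comp_const_add τ θ)
  have hMθ : h⁻¹ * M (τ + θ) = M θ * h⁻¹ :=
    inv_mul_eq_mul_inv_of_mul_mul_inv_eq hh (add_comm θ τ ▸ hM θ)
  rw [zero_mulVec, zero_add, mulVec_mulVec, ← mul_assoc, hMθ] at this
  simpa only [mulVec_mulVec, mul_assoc] using this

theorem Continuous.matrix_inv {X : Type*} [TopologicalSpace X] [DecidableEq n]
    {Y : X → Matrix n n 𝕜} (hY : Continuous Y) (hYu : ∀ x, IsUnit (Y x)) :
    Continuous fun x => (Y x)⁻¹ :=
  continuous_iff_continuousAt.2 fun x =>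
    (continuousAt_matrix_inv _ (NormedRing.inverse_continuousAt
      ((isUnit_iff_isUnit_det _).1 (hYu x)).unit)).comp hY.continuousAt

/-- The operator `V` of the paper has kernel `K = B h⁻¹` and base point `a = -τ`. -/
noncomputable def volterra [DecidableEq n] (Y K : ℝ → Matrix n n 𝕜) (a : ℝ)
    (φ : ℝ → n → 𝕜) (θ : ℝ) : n → 𝕜 :=
  ∫ s in a..θ, (Y θ * (Y s)⁻¹ * K s) *ᵥ φ s

section Volterra

variable [DecidableEq n] {A Y K : ℝ → Matrix n n 𝕜} {a : ℝ}

theorem volterra_eq_mulVec_integral {φ : ℝ → n → 𝕜} {θ : ℝ}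
    (hq : IntervalIntegrable (fun s => ((Y s)⁻¹ * K s) *ᵥ φ s) MeasureTheory.volume a θ) :
    volterra Y K a φ θ = Y θ *ᵥ ∫ s in a..θ, ((Y s)⁻¹ * K s) *ᵥ φ s := by
  have := (LinearMap.toContinuousLinearMap (Y θ).mulVecLin).intervalIntegral_comp_comm hq
  simpa only [volterra, LinearMap.coe_toContinuousLinearMap', mulVecLin_apply, mulVec_mulVec,
    mul_assoc] using this

theorem hasDerivAt_volterra (hYd : ∀ t i j, HasDerivAt (fun s => Y s i j) ((A t * Y t) i j) t)
    (hYu : ∀ t, IsUnit (Y t)) (hK : Continuous K) {φ : ℝ → n → 𝕜} (hφ : Continuous φ) (θ : ℝ) :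
    HasDerivAt (volterra Y K a φ) (A θ *ᵥ volterra Y K a φ θ + K θ *ᵥ φ θ) θ := by
  have hY : Continuous Y :=
    continuous_matrix fun i j => continuous_iff_continuousAt.2 fun t => (hYd t i j).continuousAt
  have hq : Continuous fun s => ((Y s)⁻¹ * K s) *ᵥ φ s :=
    ((hY.matrix_inv hYu).mul hK).matrix_mulVec hφ
  have hV : volterra Y K a φ = fun t => Y t *ᵥ ∫ s in a..t, ((Y s)⁻¹ * K s) *ᵥ φ s :=
    funext fun t => volterra_eq_mulVec_integral (hq.intervalIntegrable a t)
  have hYY : Y θ * (Y θ)⁻¹ = 1 := mul_nonsing_inv _ ((isUnit_iff_isUnit_det _).1 (hYu θ))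
  have hI : HasDerivAt (fun t => ∫ s in a..t, ((Y s)⁻¹ * K s) *ᵥ φ s)
      (((Y θ)⁻¹ * K θ) *ᵥ φ θ) θ :=
    intervalIntegral.integral_hasDerivAt_right (hq.intervalIntegrable _ _)
      hq.aestronglyMeasurable.stronglyMeasurableAtFilter hq.continuousAt
  rw [hV]
  refine (hasDerivAt_mulVec (hYd θ) hI).congr_deriv ?_
  simp only [mulVec_mulVec, ← mul_assoc, hYY, one_mul]

theorem hasDerivAt_add_smul_volterra
    (hYd : ∀ t i j, HasDerivAt (fun s => Y s i j) ((A t * Y t) i j) t)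
    (hYu : ∀ t, IsUnit (Y t)) (hK : Continuous K) {c φ : ℝ → n → 𝕜} {θ : ℝ}
    (hc : HasDerivAt c (A θ *ᵥ c θ) θ) (hφ : Continuous φ) (z : 𝕜) :
    HasDerivAt (fun t => c t + z • volterra Y K a φ t)
      (A θ *ᵥ (c θ + z • volterra Y K a φ θ) + z • K θ *ᵥ φ θ) θ := by
  refine (hc.add ((hasDerivAt_volterra hYd hYu hK hφ θ).const_smul z)).congr_deriv ?_
  rw [mulVec_add, mulVec_smul, smul_add, add_assoc]

end Volterra

section IntegralEquation

variable [DecidableEq n] {A Y K : ℝ → Matrix n n 𝕜} {c G : ℝ → n → 𝕜} {a b : ℝ} {z : 𝕜}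

theorem eqOn_add_smul_volterra
    (hYd : ∀ t i j, HasDerivAt (fun s => Y s i j) ((A t * Y t) i j) t)
    (hYu : ∀ t, IsUnit (Y t)) (hA : Continuous A) (hK : Continuous K)
    (hc : ∀ t, HasDerivAt c (A t *ᵥ c t) t) (hG : ∀ t, HasDerivAt G ((A t + z • K t) *ᵥ G t) t)
    (hcG : c a = G a) :
    EqOn G (fun θ => c θ + z • volterra Y K a G θ) (Icc a b) := by
  have hGc : Continuous G := continuous_iff_continuousAt.2 fun t => (hG t).continuousAt
  have hΦ t := hasDerivAt_add_smul_volterra (a := a) hYd hYu hK (hc t) hGc z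
  refine eqOn_Icc_of_hasDerivWithinAt_mulVec_add (r := fun t => z • K t *ᵥ G t)
    hA.continuousOn hGc.continuousOn (fun t _ => ?_)
    (HasDerivAt.continuousOn fun t _ => hΦ t) (fun t _ => (hΦ t).hasDerivWithinAt) ?_
  · rw [← smul_mulVec, ← add_mulVec]
    exact (hG t).hasDerivWithinAt
  · simp [volterra, hcG]

theorem eqOn_of_eqOn_add_smul_volterra (hab : a ≤ b)
    (hYd : ∀ t i j, HasDerivAt (fun s => Y s i j) ((A t * Y t) i j) t)
    (hYu : ∀ t, IsUnit (Y t)) (hA : Continuous A) (hK : Continuous K)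
    (hc : ∀ t, HasDerivAt c (A t *ᵥ c t) t) (hG : ∀ t, HasDerivAt G ((A t + z • K t) *ᵥ G t) t)
    (hcG : c a = G a) {ψ : ℝ → n → 𝕜} (hψc : ContinuousOn ψ (Icc a b))
    (hψ : ∀ θ ∈ Icc a b, ψ θ = c θ + z • volterra Y K a ψ θ) :
    EqOn ψ G (Icc a b) := by
  set ψ' := IccExtend hab ((Icc a b).domRestrict ψ)
  have hψ'c : Continuous ψ' := hψc.domRestrict.Icc_extend'
  have hψ'ψ : EqOn ψ' ψ (Icc a b) := fun t ht => IccExtend_of_mem hab _ ht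
  have hΦψ : EqOn (fun θ => c θ + z • volterra Y K a ψ' θ) ψ (Icc a b) := by
    intro θ hθ
    rw [hψ θ hθ]
    dsimp only
    congr 2
    refine intervalIntegral.integral_congr fun s hs => ?_
    rw [uIcc_of_le hθ.1] at hs
    simp only [hψ'ψ (Icc_subset_Icc_right hθ.2 hs)]
  have hΦG : EqOn (fun θ => c θ + z • volterra Y K a ψ' θ) G (Icc a b) := by
    refine eqOn_Icc_of_hasDerivWithinAt_mulVec_add (r := 0)
      (hA.add (hK.const_smul z)).continuousOn ?_ (fun t ht => ?_)
      (HasDerivAt.continuousOn fun t _ => hG t) (fun t _ => ?_) (by simp [volterra, hcG])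
    · exact HasDerivAt.continuousOn fun t _ =>
        hasDerivAt_add_smul_volterra hYd hYu hK (hc t) hψ'c z
    · have hΦt := hasDerivAt_add_smul_volterra (a := a) hYd hYu hK (hc t) hψ'c z
      have ht' := Ico_subset_Icc_self ht
      rw [hψ'ψ ht', ← hΦψ ht', ← smul_mulVec, ← add_mulVec] at hΦt
      simpa using hΦt.hasDerivWithinAt
    · simpa using (hG t).hasDerivWithinAt
  exact fun θ hθ => (hΦψ hθ).symm.trans (hΦG hθ)

end IntegralEquation

theorem stmt_15_general {N : ℕ} (τ : ℝ) (hτ : 0 < τ)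
    (A B : ℝ → Matrix (Fin N) (Fin N) ℂ)
    (hA : Continuous A) (hB : Continuous B)
    (h : Matrix (Fin N) (Fin N) ℂ) (hh : IsUnit h)
    (hAsym : ∀ t, h * A t * h⁻¹ = A (t + τ))
    (hBsym : ∀ t, h * B t * h⁻¹ = B (t + τ))
    (Y : ℝ → Matrix (Fin N) (Fin N) ℂ)
    (hY0 : Y 0 = 1) (hYu : ∀ t, IsUnit (Y t))
    (hYd : ∀ (t : ℝ) (i j : Fin N),
      HasDerivAt (fun s => Y s i j) ((A t * Y t) i j) t)
    (F : ℝ → ℂ → Matrix (Fin N) (Fin N) ℂ)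
    (hF0 : ∀ z, F 0 z = 1)
    (hFd : ∀ (z : ℂ) (t : ℝ) (i j : Fin N),
      HasDerivAt (fun s => F s z i j) (((A t + z • (B t * h⁻¹)) * F t z) i j) t)
    (z : ℂ) (u : Fin N → ℂ) :
    (∀ θ ∈ Set.Icc (-τ) 0,
      (h⁻¹ * F (τ + θ) z).mulVec u
        = (h⁻¹ * Y (τ + θ)).mulVec u
          + z • ∫ s in (-τ)..θ,
              (Y θ * (Y s)⁻¹ * B s * h⁻¹ * (h⁻¹ * F (τ + s) z)).mulVec u) ∧
    (∀ ψ : ℝ → (Fin N → ℂ), ContinuousOn ψ (Set.Icc (-τ) 0) →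
      (∀ θ ∈ Set.Icc (-τ) 0,
        ψ θ = (h⁻¹ * Y (τ + θ)).mulVec u
          + z • ∫ s in (-τ)..θ, (Y θ * (Y s)⁻¹ * B s * h⁻¹).mulVec (ψ s)) →
      ∀ θ ∈ Set.Icc (-τ) 0, ψ θ = (h⁻¹ * F (τ + θ) z).mulVec u) := by
  have hK : Continuous fun s => B s * h⁻¹ := hB.mul continuous_const
  have hconj t : h * (A t + z • (B t * h⁻¹)) * h⁻¹ = A (t + τ) + z • (B (t + τ) * h⁻¹) := by
    simp only [Matrix.mul_add, Matrix.add_mul, Matrix.mul_smul, Matrix.smul_mul, ← mul_assoc,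
      hAsym, hBsym]
  have hc := hasDerivAt_inv_mul_comp_const_add_mulVec hYd hh hAsym u
  have hG := hasDerivAt_inv_mul_comp_const_add_mulVec (P := fun s => F s z) (hFd z) hh hconj u
  have hcG : (h⁻¹ * Y (τ + -τ)) *ᵥ u = (h⁻¹ * F (τ + -τ) z) *ᵥ u := by simp [hY0, hF0]
  refine ⟨fun θ hθ => ?_, fun ψ hψc hψ => ?_⟩
  · simpa only [volterra, mulVec_mulVec, mul_assoc] using
      eqOn_add_smul_volterra hYd hYu hA hK hc hG hcG hθ
  · refine eqOn_of_eqOn_add_smul_volterra (by linarith) hYd hYu hA hK hc hG hcG hψc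
      fun θ hθ => ?_
    simpa only [volterra, mul_assoc] using hψ θ hθ

/-- `θ ↦ h⁻¹ F(τ+θ, z) u` is the unique continuous solution of the
integral equation `φ = Du + zVφ`, i.e. `((I - zV)⁻¹ D u)(θ) = h⁻¹ F(τ+θ, z) u`. -/
theorem stmt_15 {N : ℕ} (τ : ℝ) (hτ : 0 < τ)
    (A B : ℝ → Matrix (Fin N) (Fin N) ℂ)
    (hA : Continuous A) (hB : Continuous B)
    (h : Matrix (Fin N) (Fin N) ℂ) (hh : IsUnit h)
    (hAsym : ∀ t, h * A t * h⁻¹ = A (t + τ))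
    (hBsym : ∀ t, h * B t * h⁻¹ = B (t + τ))
    (Y : ℝ → Matrix (Fin N) (Fin N) ℂ)
    (hY0 : Y 0 = 1) (hYu : ∀ t, IsUnit (Y t))
    (hYd : ∀ (t : ℝ) (i j : Fin N),
      HasDerivAt (fun s => Y s i j) ((A t * Y t) i j) t)
    (F : ℝ → ℂ → Matrix (Fin N) (Fin N) ℂ)
    (hF0 : ∀ z, F 0 z = 1) (hFu : ∀ t z, IsUnit (F t z))
    (hFd : ∀ (z : ℂ) (t : ℝ) (i j : Fin N),
      HasDerivAt (fun s => F s z i j) (((A t + z • (B t * h⁻¹)) * F t z) i j) t)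
    (z : ℂ) (u : Fin N → ℂ) :
    (∀ θ ∈ Set.Icc (-τ) 0,
      (h⁻¹ * F (τ + θ) z).mulVec u
        = (h⁻¹ * Y (τ + θ)).mulVec u
          + z • ∫ s in (-τ)..θ,
              (Y θ * (Y s)⁻¹ * B s * h⁻¹ * (h⁻¹ * F (τ + s) z)).mulVec u) ∧
    (∀ ψ : ℝ → (Fin N → ℂ), ContinuousOn ψ (Set.Icc (-τ) 0) →
      (∀ θ ∈ Set.Icc (-τ) 0,
        ψ θ = (h⁻¹ * Y (τ + θ)).mulVec u
          + z • ∫ s in (-τ)..θ, (Y θ * (Y s)⁻¹ * B s * h⁻¹).mulVec (ψ s)) →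
      ∀ θ ∈ Set.Icc (-τ) 0, ψ θ = (h⁻¹ * F (τ + θ) z).mulVec u) :=
  stmt_15_general τ hτ A B hA hB h hh hAsym hBsym Y hY0 hYu hYd F hF0 hFd z u
end

section
/- Let X be a complex Banach space and T = V + R a bounded operator on X, where σ(V) ⊆ {0} and R = DC has finite rank n, with C : X → ℂ^n and D : ℂ^n → X bounded linear. Define Δ(z) = I_{ℂ^n} - zC(I - zV)⁻¹D. Then for μ ∈ ℂ \ {0}: μ⁻¹ is an eigenvalue of T if and only if det Δ(μ) = 0. Moreover x ∈ ker(I - μT), x ≠ 0, corresponds bijectively to c ∈ ker Δ(μ), c ≠ 0, via c = Cx' for a suitable x' (explicitly: x = μ(I-μV)⁻¹Dc gives a bijection ker Δ(μ) → ker(I-μT)). -/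
/-!
Put `L = I - μV`, invertible because `μ⁻¹ ∉ σ(V)`, and `g = μL⁻¹D`. Then `Δ(μ)c = c - C(gc)` and
`(I - μT)x = L x - μDCx`, so `ker Δ(μ)` is the fixed-point set of `C ∘ g` and `ker(I - μT)` that
of `g ∘ C`; `g` maps the former bijectively onto the latter, with inverse `C`. As `g 0 = 0`, one
kernel is nonzero iff the other is, and `ker Δ(μ) ≠ 0` iff `det Δ(μ) = 0`.
-/

open Function

theorem isUnit_one_sub_smul_of_inv_notMem_spectrum {𝕜 A : Type*} [Field 𝕜] [Ring A]
    [Algebra 𝕜 A] {a : A} {z : 𝕜} (hz : z ≠ 0) (h : z⁻¹ ∉ spectrum 𝕜 a) :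
    IsUnit (1 - z • a) := by
  have hu := spectrum.notMem_iff.mp h
  rw [Algebra.algebraMap_eq_smul_one, ← Units.val_mk0 (inv_ne_zero hz), ← Units.smul_def,
    IsUnit.smul_sub_iff_sub_inv_smul, Units.smul_def] at hu
  simpa using hu

theorem Set.BijOn.nontrivial_iff {α β : Type*} {f : α → β} {s : Set α} {t : Set β}
    (h : Set.BijOn f s t) : t.Nontrivial ↔ s.Nontrivial :=
  h.image_eq ▸ h.injOn.image_nontrivial_iff

theorem Matrix.one_sub_smul_toMatrix'_mulVec {R n : Type*} [CommRing R] [Fintype n] [DecidableEq n]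
    (z : R) (f : (n → R) →ₗ[R] n → R) (c : n → R) :
    (1 - z • LinearMap.toMatrix' f).mulVec c = c - z • f c := by
  rw [Matrix.sub_mulVec, Matrix.one_mulVec, Matrix.smul_mulVec, ← Matrix.toLin'_apply,
    Matrix.toLin'_toMatrix']

theorem ContinuousLinearMap.sub_apply_eq_zero_iff_inverse_apply_eq {R X : Type*} [Ring R]
    [AddCommGroup X] [Module R X] [TopologicalSpace X] [IsTopologicalAddGroup X]
    {L : X →L[R] X} (hL : IsUnit L) (K : X →L[R] X) (x : X) :
    (L - K) x = 0 ↔ Ring.inverse L (K x) = x := by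
  obtain ⟨u, rfl⟩ := hL
  rw [Ring.inverse_unit, sub_apply, sub_eq_zero, eq_comm]
  exact ((ContinuousLinearEquiv.unitsEquiv R X u).symm_apply_eq).symm

theorem stmt_17_general {X : Type*} [NormedAddCommGroup X] [NormedSpace ℂ X]
    (n : ℕ) (V T : X →L[ℂ] X)
    (hσ : spectrum ℂ V ⊆ {0})
    (C : X →L[ℂ] (Fin n → ℂ)) (D : (Fin n → ℂ) →L[ℂ] X)
    (hT : T = V + D ∘L C)
    (Δ : ℂ → Matrix (Fin n) (Fin n) ℂ)
    (hΔ : ∀ z : ℂ, Δ z = 1 - z • LinearMap.toMatrix'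
      ((C ∘L Ring.inverse (1 - z • V) ∘L D : (Fin n → ℂ) →L[ℂ] (Fin n → ℂ)) :
        (Fin n → ℂ) →ₗ[ℂ] (Fin n → ℂ)))
    (μ : ℂ) (hμ : μ ≠ 0) :
    ((∃ x : X, x ≠ 0 ∧ T x = μ⁻¹ • x) ↔ (Δ μ).det = 0) ∧
    Set.BijOn (fun c : Fin n → ℂ => μ • (Ring.inverse (1 - μ • V)) (D c))
      {c | (Δ μ).mulVec c = 0}
      {x : X | ((1 : X →L[ℂ] X) - μ • T) x = 0} := by
  have hunit : IsUnit (1 - μ • V) :=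
    isUnit_one_sub_smul_of_inv_notMem_spectrum hμ fun h ↦ inv_ne_zero hμ (hσ h)
  set g := fun c : Fin n → ℂ => μ • (Ring.inverse (1 - μ • V)) (D c)
  have hker_Δ : {c | (Δ μ).mulVec c = 0} = fixedPoints (C ∘ g) := by
    ext c
    rw [Set.mem_ofPred_eq, hΔ, Matrix.one_sub_smul_toMatrix'_mulVec, sub_eq_zero, eq_comm]
    simp [g, IsFixedPt]
  have hker_T : {x : X | ((1 : X →L[ℂ] X) - μ • T) x = 0} = fixedPoints (g ∘ C) := by
    have hsplit : (1 : X →L[ℂ] X) - μ • T = (1 - μ • V) - μ • D ∘L C := by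
      rw [hT, smul_add, sub_add_eq_sub_sub]
    ext x
    rw [Set.mem_ofPred_eq, hsplit, ContinuousLinearMap.sub_apply_eq_zero_iff_inverse_apply_eq hunit]
    simp [g, IsFixedPt]
  have hbij : Set.BijOn g {c | (Δ μ).mulVec c = 0} {x : X | ((1 : X →L[ℂ] X) - μ • T) x = 0} :=
    hker_Δ ▸ hker_T ▸ bijOn_fixedPoints_comp C g
  refine ⟨?_, hbij⟩
  have heigen : (∃ x : X, x ≠ 0 ∧ T x = μ⁻¹ • x) ↔
      {x : X | ((1 : X →L[ℂ] X) - μ • T) x = 0}.Nontrivial := by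
    rw [Set.nontrivial_iff_exists_ne (by simp : (0 : X) ∈ _)]
    refine exists_congr fun x ↦ and_comm.trans (and_congr_left fun _ ↦ ?_)
    rw [Set.mem_ofPred_eq, sub_apply, one_apply_eq_self, smul_apply, sub_eq_zero,
      eq_inv_smul_iff₀ hμ, eq_comm]
  rw [heigen, hbij.nontrivial_iff, Set.nontrivial_iff_exists_ne (by simp : (0 : Fin n → ℂ) ∈ _),
    ← Matrix.exists_mulVec_eq_zero_iff]
  simp [and_comm]

/-- Kaashoek–Verduyn Lunel eigenvalue correspondence: for
`T = V + DC` with `σ(V) ⊆ {0}` and `Δ(z) = I - zC(I - zV)⁻¹D`, a non-zero `μ⁻¹` is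
an eigenvalue of `T` iff `det Δ(μ) = 0`, and `c ↦ μ(I - μV)⁻¹Dc` is a bijection
from `ker Δ(μ)` onto `ker(I - μT)`. -/
theorem stmt_17 {X : Type*} [NormedAddCommGroup X] [NormedSpace ℂ X] [CompleteSpace X]
    (n : ℕ) (V T : X →L[ℂ] X)
    (hσ : spectrum ℂ V ⊆ {0})
    (C : X →L[ℂ] (Fin n → ℂ)) (D : (Fin n → ℂ) →L[ℂ] X)
    (hT : T = V + D ∘L C)
    (Δ : ℂ → Matrix (Fin n) (Fin n) ℂ)
    (hΔ : ∀ z : ℂ, Δ z = 1 - z • LinearMap.toMatrix'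
      ((C ∘L Ring.inverse (1 - z • V) ∘L D : (Fin n → ℂ) →L[ℂ] (Fin n → ℂ)) :
        (Fin n → ℂ) →ₗ[ℂ] (Fin n → ℂ)))
    (μ : ℂ) (hμ : μ ≠ 0) :
    ((∃ x : X, x ≠ 0 ∧ T x = μ⁻¹ • x) ↔ (Δ μ).det = 0) ∧
    Set.BijOn (fun c : Fin n → ℂ => μ • (Ring.inverse (1 - μ • V)) (D c))
      {c | (Δ μ).mulVec c = 0}
      {x : X | ((1 : X →L[ℂ] X) - μ • T) x = 0} :=
  stmt_17_general n V T hσ C D hT Δ hΔ μ hμ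
end
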